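/- Backpropagation limit in the neural ODE regime (Theorem 5.1, first case). Fix d ≥ 1, an input x ∈ ℝ^d, an activation σ ∈ C³(ℝ,ℝ) with σ(0)=0, σ'(0)=1, bounded third derivative, and σ Lipschitz. Let Ā ∈ H¹([0,1], ℝ^{d×d}) and b̄ ∈ H¹([0,1], ℝ^d). For each L ∈ ℕ define h_0^{(L)} = x, h_{k+1}^{(L)} = h_k^{(L)} + L^{-1} σ_d(Ā_{k/L} h_k^{(L)} + b̄_{k/L}), and the backward Jacobians g_L^{(L)} = I_d, g_k^{(L)} = g_{k+1}^{(L)} (I_d + L^{-1} diag(σ'_d(Ā_{k/L} h_k^{(L)} + b̄_{k/L})) Ā_{k/L}) for k = L−1,…,0; define the interpolation Ḡ_t^{(L)} = g_{k+1}^{(L)} for k/L < t ≤ (k+1)/L (with Ḡ_0^{(L)} = g_0^{(L)}). Let H : [0,1] → ℝ^d solve dH_t/dt = σ_d(Ā_t H_t + b̄_t), H_0 = x, and let G : [0,1] → ℝ^{d×d} solve the backward linear ODE dG_t/dt = −G_t diag(σ'_d(Ā_t H_t + b̄_t)) Ā_t with G_1 = I_d. Then lim_{L→∞} sup_{0 ≤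 t ≤ 1} ‖G_t − Ḡ_t^{(L)}‖ = 0. -/

import Mathlib

/-!
Both recursions are one-step schemes on the grid `k / L`. The forward one is the explicit Euler
scheme of the neural ODE; the backward one, read in reversed time `t ↦ 1 - t`, is an Euler scheme
for the linear ODE `Y' = Y B(1 - t)`, `B_t = diag(σ'_d(Ā_t H_t + b̄_t)) Ā_t`, except that its
coefficient is evaluated at the discrete states `h_k` instead of `H_{k/L}`. A scheme whose increment
is Lipschitz (stability) and, along the exact solution, uniformly close on each cell
`[k/L, (k+1)/L]` to the derivative (consistency) converges uniformly on the grid: the mean value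
inequality bounds the local error on a cell and a discrete Grönwall inequality sums it up.
Forward convergence `h_k → H_{k/L}` makes the backward scheme consistent, because
`(h, A, b) ↦ diag(σ'_d(A h + b)) A` is uniformly continuous near the compact curve
`t ↦ (H_t, Ā_t, b̄_t)`. Uniform continuity of `G` then passes from the grid to all of `[0, 1]`.
-/

open MeasureTheory Filter Set

/-- Componentwise application of a scalar function to a vector in `ℝ^d`. -/
noncomputable def sigd {d : ℕ} (σ : ℝ → ℝ) (z : EuclideanSpace ℝ (Fin d)) :
    EuclideanSpace ℝ (Fin d) :=
  WithLp.toLp 2 (fun i => σ (z i))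

/-- The diagonal matrix `diag(v)`, viewed as a continuous linear map on `ℝ^d`. -/
noncomputable def diagCLM {d : ℕ} (v : EuclideanSpace ℝ (Fin d)) :
    EuclideanSpace ℝ (Fin d) →L[ℝ] EuclideanSpace ℝ (Fin d) :=
  Matrix.toEuclideanCLM (𝕜 := ℝ) (Matrix.diagonal (fun i => v i))

lemma IsCompact.exists_forall_dist_lt {X Z : Type*} [PseudoMetricSpace X] [PseudoMetricSpace Z]
    {K : Set X} (hK : IsCompact K) {f : X → Z} (hf : ∀ x ∈ K, ContinuousAt f x) {ε : ℝ}
    (hε : 0 < ε) : ∃ δ > 0, ∀ x ∈ K, ∀ y, dist x y < δ → dist (f x) (f y) < ε := by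
  obtain ⟨δ, hδ, h⟩ := Metric.mem_uniformity_dist.1
    (hK.uniformContinuousAt_of_continuousAt f hf (Metric.dist_mem_uniformity hε))
  exact ⟨δ, hδ, fun x hx y hxy => h hxy hx⟩

lemma eventually_inv_natCast_le {δ : ℝ} (hδ : 0 < δ) : ∀ᶠ L : ℕ in atTop, (L : ℝ)⁻¹ ≤ δ :=
  tendsto_inv_atTop_nhds_zero_nat.eventually (eventually_le_nhds hδ)

section Grid

variable {E : Type*} [NormedAddCommGroup E]

def TendstoUniformlyOnGrid (y : ℕ → ℕ → E) (Y : ℝ → E) : Prop :=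
  ∀ ε > 0, ∀ᶠ L : ℕ in atTop, ∀ k ≤ L, ‖y L k - Y (k / L)‖ ≤ ε

def TendstoUniformlyOnCells (v : ℕ → ℕ → E) (V : ℝ → E) : Prop :=
  ∀ ε > 0, ∀ᶠ L : ℕ in atTop, ∀ k < L, ∀ s ∈ Icc ((k : ℝ) / L) ((k + 1) / L), ‖v L k - V s‖ ≤ ε

lemma natCast_div_mem_Icc {k L : ℕ} (hk : k ≤ L) : (k : ℝ) / L ∈ Icc (0 : ℝ) 1 :=
  ⟨by positivity, div_le_one_of_le₀ (by exact_mod_cast hk) (by positivity)⟩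

lemma Icc_natCast_div_subset_Icc {k L : ℕ} (hk : k < L) :
    Icc ((k : ℝ) / L) ((k + 1) / L) ⊆ Icc 0 1 :=
  Icc_subset_Icc (natCast_div_mem_Icc hk.le).1 (by exact_mod_cast (natCast_div_mem_Icc hk).2)

lemma left_mem_Icc_natCast_div (k L : ℕ) : (k : ℝ) / L ∈ Icc ((k : ℝ) / L) ((k + 1) / L) :=
  left_mem_Icc.2 (by gcongr; linarith)

lemma dist_le_inv_of_mem_Icc_natCast_div {k L : ℕ} {s t : ℝ}
    (hs : s ∈ Icc ((k : ℝ) / L) ((k + 1) / L)) (ht : t ∈ Icc ((k : ℝ) / L) ((k + 1) / L)) :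
    dist s t ≤ (L : ℝ)⁻¹ :=
  (Real.dist_le_of_mem_Icc hs ht).trans_eq (by ring)

lemma one_sub_mem_Icc_natCast_div {j L : ℕ} (hj : j < L) {s : ℝ}
    (hs : s ∈ Icc ((j : ℝ) / L) ((j + 1) / L)) :
    1 - s ∈ Icc (((L - (j + 1) : ℕ) : ℝ) / L) (((L - (j + 1) : ℕ) + 1) / L) := by
  have hL : (L : ℝ) ≠ 0 := Nat.cast_ne_zero.2 (by omega)
  rw [Nat.cast_sub hj, Nat.cast_add_one]
  have h₁ : ((L : ℝ) - (j + 1)) / L = 1 - (j + 1) / L := by field_simp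
  have h₂ : ((L : ℝ) - (j + 1) + 1) / L = 1 - j / L := by field_simp; ring
  rw [h₁, h₂]
  exact ⟨by linarith [hs.2], by linarith [hs.1]⟩

lemma one_sub_natCast_sub_div {k L : ℕ} (hk : k ≤ L) (hL : 0 < L) :
    1 - ((L - k : ℕ) : ℝ) / L = k / L := by
  have hL' : (L : ℝ) ≠ 0 := by positivity
  rw [Nat.cast_sub hk]
  field_simp
  ring

lemma ContinuousOn.tendstoUniformlyOnCells {V : ℝ → E} (hV : ContinuousOn V (Icc 0 1)) :
    TendstoUniformlyOnCells (fun L k => V (k / L)) V := by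
  intro ε hε
  obtain ⟨δ, hδ, hVδ⟩ := Metric.uniformContinuousOn_iff_le.1
    (isCompact_Icc.uniformContinuousOn_of_continuous hV) ε hε
  filter_upwards [eventually_inv_natCast_le hδ] with L hL k hk s hs
  rw [← dist_eq_norm]
  exact hVδ _ (natCast_div_mem_Icc hk.le) s (Icc_natCast_div_subset_Icc hk hs)
    ((dist_le_inv_of_mem_Icc_natCast_div (left_mem_Icc_natCast_div k L) hs).trans hL)

lemma TendstoUniformlyOnGrid.tendstoUniformlyOnCells {w : ℕ → ℕ → E} {W : ℝ → E}
    (hw : TendstoUniformlyOnGrid w W) (hW : ContinuousOn W (Icc 0 1)) :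
    TendstoUniformlyOnCells w W := by
  intro ε hε
  filter_upwards [hw (ε / 2) (by positivity), hW.tendstoUniformlyOnCells (ε / 2) (by positivity)]
    with L hgrid hcell k hk s hs
  calc ‖w L k - W s‖ ≤ ‖w L k - W (k / L)‖ + ‖W (k / L) - W s‖ :=
        norm_sub_le_norm_sub_add_norm_sub _ _ _
    _ ≤ ε / 2 + ε / 2 := add_le_add (hgrid k hk.le) (hcell k hk s hs)
    _ = ε := add_halves ε

lemma TendstoUniformlyOnGrid.of_reverse {y : ℕ → ℕ → E} {Y : ℝ → E}
    (h : TendstoUniformlyOnGrid (fun L j => y L (L - j)) (fun t => Y (1 - t))) :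
    TendstoUniformlyOnGrid y Y := by
  intro ε hε
  filter_upwards [h ε hε, eventually_gt_atTop 0] with L hL hL₀ k hk
  have := hL (L - k) (Nat.sub_le L k)
  rwa [Nat.sub_sub_self hk, one_sub_natCast_sub_div hk hL₀] at this

lemma TendstoUniformlyOnCells.comp {F : Type*} [NormedAddCommGroup F] {w : ℕ → ℕ → E}
    {W : ℝ → E} (hw : TendstoUniformlyOnCells w W) (hW : ContinuousOn W (Icc 0 1)) {Ψ : E → F}
    (hΨ : Continuous Ψ) : TendstoUniformlyOnCells (fun L k => Ψ (w L k)) (fun s => Ψ (W s)) := by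
  intro ε hε
  obtain ⟨δ, hδ, hΨδ⟩ := (isCompact_Icc.image_of_continuousOn hW).exists_forall_dist_lt
    (fun x _ => hΨ.continuousAt) hε
  filter_upwards [hw (δ / 2) (by positivity)] with L hL k hk s hs
  rw [← dist_eq_norm, dist_comm]
  refine (hΨδ _ (mem_image_of_mem W (Icc_natCast_div_subset_Icc hk hs)) _ ?_).le
  rw [dist_eq_norm, norm_sub_rev]
  linarith [hL k hk s hs]

lemma TendstoUniformlyOnCells.reverse {v : ℕ → ℕ → E} {V : ℝ → E}
    (hv : TendstoUniformlyOnCells v V) :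
    TendstoUniformlyOnCells (fun L j => v L (L - (j + 1))) (fun s => V (1 - s)) := by
  intro ε hε
  filter_upwards [hv ε hε] with L hL j hj s hs
  exact hL _ (by omega) _ (one_sub_mem_Icc_natCast_div hj hs)

lemma TendstoUniformlyOnCells.eventually_norm_le {v : ℕ → ℕ → E} {V : ℝ → E}
    (hv : TendstoUniformlyOnCells v V) {M : ℝ} (hM : ∀ s ∈ Icc (0 : ℝ) 1, ‖V s‖ ≤ M) :
    ∀ᶠ L in atTop, ∀ k < L, ‖v L k‖ ≤ M + 1 := by
  filter_upwards [hv 1 one_pos] with L hL k hk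
  have hs := left_mem_Icc_natCast_div k L
  linarith [norm_le_norm_add_norm_sub' (v L k) (V (k / L)), hL k hk _ hs,
    hM _ (Icc_natCast_div_subset_Icc hk hs)]

lemma TendstoUniformlyOnCells.mul {R : Type*} [NormedRing R] {u v : ℕ → ℕ → R} {U V : ℝ → R}
    (hu : TendstoUniformlyOnCells u U) (hv : TendstoUniformlyOnCells v V)
    (hU : ContinuousOn U (Icc 0 1)) (hV : ContinuousOn V (Icc 0 1)) :
    TendstoUniformlyOnCells (fun L k => u L k * v L k) (fun s => U s * V s) := by
  obtain ⟨MU, hMU⟩ := isCompact_Icc.exists_bound_of_continuousOn hU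
  obtain ⟨MV, hMV⟩ := isCompact_Icc.exists_bound_of_continuousOn hV
  have hMU₀ : 0 ≤ MU := (norm_nonneg _).trans (hMU 0 (left_mem_Icc.2 zero_le_one))
  have hMV₀ : 0 ≤ MV := (norm_nonneg _).trans (hMV 0 (left_mem_Icc.2 zero_le_one))
  intro ε hε
  set η := ε / (MV + 1 + MU)
  have hη : 0 < η := by positivity
  filter_upwards [hu η hη, hv η hη, hv.eventually_norm_le hMV] with L huL hvL hvM k hk s hs
  calc ‖u L k * v L k - U s * V s‖ = ‖(u L k - U s) * v L k + U s * (v L k - V s)‖ := by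
        rw [sub_mul, mul_sub]; abel_nf
    _ ≤ ‖u L k - U s‖ * ‖v L k‖ + ‖U s‖ * ‖v L k - V s‖ :=
        (norm_add_le _ _).trans (add_le_add (norm_mul_le _ _) (norm_mul_le _ _))
    _ ≤ η * (MV + 1) + MU * η := by
        gcongr
        exacts [huL k hk s hs, hvM k hk, hMU s (Icc_natCast_div_subset_Icc hk hs), hvL k hk s hs]
    _ = η * (MV + 1 + MU) := by ring
    _ = ε := div_mul_cancel₀ _ (by positivity)

lemma natCeil_mul_le_and_dist_le {L : ℕ} (hL : 0 < L) {t : ℝ} (ht : t ∈ Icc (0 : ℝ) 1) :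
    ⌈(L : ℝ) * t⌉₊ ≤ L ∧ dist t (⌈(L : ℝ) * t⌉₊ / L) ≤ (L : ℝ)⁻¹ := by
  have hL' : (0 : ℝ) < L := by exact_mod_cast hL
  have hLt : 0 ≤ (L : ℝ) * t := mul_nonneg hL'.le ht.1
  refine ⟨Nat.ceil_le.2 (mul_le_of_le_one_right hL'.le ht.2), ?_⟩
  rw [Real.dist_eq, abs_le]
  constructor
  · rw [neg_le_sub_iff_le_add, div_le_iff₀ hL', add_mul, inv_mul_cancel₀ hL'.ne']
    linarith [Nat.ceil_lt_add_one hLt]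
  · have : t ≤ ⌈(L : ℝ) * t⌉₊ / L := (le_div_iff₀ hL').2 (by linarith [Nat.le_ceil ((L : ℝ) * t)])
    linarith [inv_pos.2 hL']

theorem tendsto_iSup_norm_sub_natCeil {G : ℝ → E} {g : ℕ → ℕ → E}
    (hG : ContinuousOn G (Icc 0 1)) (hg : TendstoUniformlyOnGrid g G) :
    Tendsto (fun L : ℕ => ⨆ t : Icc (0 : ℝ) 1, ‖G t - g L ⌈(L : ℝ) * (t : ℝ)⌉₊‖)
      atTop (nhds 0) := by
  have hle : ∀ ε > 0, ∀ᶠ L : ℕ in atTop,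
      ∀ t ∈ Icc (0 : ℝ) 1, ‖G t - g L ⌈(L : ℝ) * t⌉₊‖ ≤ ε := by
    intro ε hε
    obtain ⟨δ, hδ, hGδ⟩ := Metric.uniformContinuousOn_iff_le.1
      (isCompact_Icc.uniformContinuousOn_of_continuous hG) (ε / 2) (by positivity)
    filter_upwards [hg (ε / 2) (by positivity), eventually_inv_natCast_le hδ,
      eventually_gt_atTop 0] with L hgL hLδ hL t ht
    obtain ⟨hk, hdist⟩ := natCeil_mul_le_and_dist_le hL ht
    calc ‖G t - g L ⌈(L : ℝ) * t⌉₊‖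
        ≤ ‖G t - G (⌈(L : ℝ) * t⌉₊ / L)‖ + ‖G (⌈(L : ℝ) * t⌉₊ / L) - g L ⌈(L : ℝ) * t⌉₊‖ :=
          norm_sub_le_norm_sub_add_norm_sub _ _ _
      _ ≤ ε / 2 + ε / 2 := by
          refine add_le_add ?_ ?_
          · rw [← dist_eq_norm]
            exact hGδ t ht _ (natCast_div_mem_Icc hk) (hdist.trans hLδ)
          · rw [norm_sub_rev]
            exact hgL _ hk
      _ = ε := add_halves ε
  refine tendsto_order.2 ⟨fun a ha => Eventually.of_forall fun L =>
    ha.trans_le (Real.iSup_nonneg fun _ => norm_nonneg _), fun a ha => ?_⟩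
  filter_upwards [hle (a / 2) (by positivity)] with L hL
  exact (Real.iSup_le (fun t : Icc (0 : ℝ) 1 => hL t t.2) (by positivity)).trans_lt
    (half_lt_self ha)

end Grid

lemma discrete_gronwall_le_mul_pow {e : ℕ → ℝ} {a b : ℝ} {n : ℕ} (ha : 0 ≤ a) (hb : 0 ≤ b)
    (h₀ : e 0 ≤ 0) (h : ∀ k < n, e (k + 1) ≤ (1 + a) * e k + b) :
    ∀ k ≤ n, e k ≤ k * b * (1 + a) ^ k := by
  intro k
  induction k with
  | zero => simpa using h₀
  | succ k ih =>
    intro hk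
    have hpow : 1 ≤ (1 + a) ^ (k + 1) := one_le_pow₀ (by linarith)
    calc e (k + 1) ≤ (1 + a) * e k + b := h k hk
      _ ≤ (1 + a) * (k * b * (1 + a) ^ k) + b := by
          have := mul_le_mul_of_nonneg_left (ih (by omega)) (by linarith : 0 ≤ 1 + a)
          linarith
      _ = k * b * (1 + a) ^ (k + 1) + b := by ring
      _ ≤ k * b * (1 + a) ^ (k + 1) + b * (1 + a) ^ (k + 1) := by
          gcongr; exact le_mul_of_one_le_right hb hpow
      _ = ((k + 1 : ℕ) : ℝ) * b * (1 + a) ^ (k + 1) := by push_cast; ring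

section Euler

variable {E : Type*} [NormedAddCommGroup E] [NormedSpace ℝ E]

lemma norm_sub_sub_smul_le_of_hasDerivAt {Y Y' : ℝ → E} {v : E} {a b M : ℝ} (hab : a ≤ b)
    (hY : ∀ s ∈ Icc a b, HasDerivAt Y (Y' s) s) (hM : ∀ s ∈ Icc a b, ‖Y' s - v‖ ≤ M) :
    ‖Y b - Y a - (b - a) • v‖ ≤ M * (b - a) := by
  have hderiv : ∀ s ∈ Icc a b,
      HasDerivWithinAt (fun s => Y s - s • v) (Y' s - v) (Icc a b) s := fun s hs => by
    have := ((hY s hs).sub ((hasDerivAt_id s).smul_const v)).hasDerivWithinAt (s := Icc a b)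
    rwa [one_smul] at this
  have := norm_image_sub_le_of_norm_deriv_le_segment' hderiv
    (fun s hs => hM s (Ico_subset_Icc_self hs)) b (right_mem_Icc.2 hab)
  convert this using 2
  rw [sub_smul]
  abel

lemma norm_add_smul_sub_le {Y Y' : ℝ → E} {Φ : E → E} {u : E} {a b C ε : ℝ} (hab : a ≤ b)
    (hY : ∀ s ∈ Icc a b, HasDerivAt Y (Y' s) s) (hΦ : ‖Φ u - Φ (Y a)‖ ≤ C * ‖u - Y a‖)
    (hcons : ∀ s ∈ Icc a b, ‖Φ (Y a) - Y' s‖ ≤ ε) :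
    ‖u + (b - a) • Φ u - Y b‖ ≤ (1 + (b - a) * C) * ‖u - Y a‖ + ε * (b - a) := by
  have hlocal : ‖Y b - Y a - (b - a) • Φ (Y a)‖ ≤ ε * (b - a) :=
    norm_sub_sub_smul_le_of_hasDerivAt hab hY fun s hs => by rw [norm_sub_rev]; exact hcons s hs
  calc ‖u + (b - a) • Φ u - Y b‖
      = ‖(u - Y a) + (b - a) • (Φ u - Φ (Y a)) - (Y b - Y a - (b - a) • Φ (Y a))‖ := by
        rw [smul_sub]; abel_nf
    _ ≤ ‖u - Y a‖ + (b - a) * (C * ‖u - Y a‖) + ε * (b - a) := by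
        refine (norm_sub_le _ _).trans (add_le_add ((norm_add_le _ _).trans ?_) hlocal)
        rw [norm_smul, Real.norm_of_nonneg (sub_nonneg.2 hab)]
        gcongr
    _ = (1 + (b - a) * C) * ‖u - Y a‖ + ε * (b - a) := by ring

theorem norm_sub_le_of_lipschitz_of_consistent {Y Y' : ℝ → E} {y : ℕ → E} {F : ℕ → E → E}
    {L : ℕ} {C ε : ℝ} (hC : 0 ≤ C) (hε : 0 ≤ ε) (hY : ∀ t ∈ Icc (0 : ℝ) 1, HasDerivAt Y (Y' t) t)
    (hy₀ : y 0 = Y 0) (hy : ∀ k < L, y (k + 1) = y k + (L : ℝ)⁻¹ • F k (y k))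
    (hF : ∀ k < L, ∀ u v, ‖F k u - F k v‖ ≤ C * ‖u - v‖)
    (hcons : ∀ k < L, ∀ s ∈ Icc ((k : ℝ) / L) ((k + 1) / L), ‖F k (Y (k / L)) - Y' s‖ ≤ ε) :
    ∀ k ≤ L, ‖y k - Y (k / L)‖ ≤ ε * Real.exp C := by
  set e : ℕ → ℝ := fun k => ‖y k - Y (k / L)‖
  have hstep : ∀ k < L, e (k + 1) ≤ (1 + C / L) * e k + ε / L := by
    intro k hk
    have hτ : ((k : ℝ) + 1) / L - k / L = (L : ℝ)⁻¹ := by ring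
    have hone := norm_add_smul_sub_le (left_mem_Icc_natCast_div k L).2
      (fun s hs => hY s (Icc_natCast_div_subset_Icc hk hs)) (hF k hk (y k) _) (hcons k hk)
    rw [hτ] at hone
    calc e (k + 1) = ‖y k + (L : ℝ)⁻¹ • F k (y k) - Y ((k + 1) / L)‖ := by
          simp only [e, hy k hk, Nat.cast_add_one]
      _ ≤ (1 + (L : ℝ)⁻¹ * C) * e k + ε * (L : ℝ)⁻¹ := hone
      _ = (1 + C / L) * e k + ε / L := by ring
  have hgronwall := discrete_gronwall_le_mul_pow (by positivity) (by positivity)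
    (by simp [e, hy₀]) hstep
  intro k hk
  have hkL : (k : ℝ) / L ≤ 1 := (natCast_div_mem_Icc hk).2
  have hpow : (1 + C / L) ^ k ≤ Real.exp C :=
    calc (1 + C / L) ^ k ≤ Real.exp (C / L) ^ k :=
          pow_le_pow_left₀ (by positivity) (by linarith [Real.add_one_le_exp (C / L)]) k
      _ = Real.exp (k / L * C) := by rw [← Real.exp_nat_mul]; ring_nf
      _ ≤ Real.exp C := Real.exp_le_exp.2 (mul_le_of_le_one_left hC hkL)
  calc e k ≤ k * (ε / L) * (1 + C / L) ^ k := hgronwall k hk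
    _ = ε * (k / L) * (1 + C / L) ^ k := by ring
    _ ≤ ε * Real.exp C :=
        mul_le_mul (mul_le_of_le_one_right hε hkL) hpow (by positivity) hε

theorem tendstoUniformlyOnGrid_of_lipschitz_of_consistent {Y Y' : ℝ → E} {y : ℕ → ℕ → E}
    {F : ℕ → ℕ → E → E} {C : ℝ} (hC : 0 ≤ C) (hY : ∀ t ∈ Icc (0 : ℝ) 1, HasDerivAt Y (Y' t) t)
    (hy₀ : ∀ L, y L 0 = Y 0) (hy : ∀ L, ∀ k < L, y L (k + 1) = y L k + (L : ℝ)⁻¹ • F L k (y L k))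
    (hF : ∀ᶠ L in atTop, ∀ k < L, ∀ u v, ‖F L k u - F L k v‖ ≤ C * ‖u - v‖)
    (hcons : TendstoUniformlyOnCells (fun L k => F L k (Y (k / L))) Y') :
    TendstoUniformlyOnGrid y Y := by
  intro ε hε
  filter_upwards [hF, hcons (ε / Real.exp C) (by positivity)] with L hFL hconsL k hk
  have := norm_sub_le_of_lipschitz_of_consistent hC (by positivity) hY (hy₀ L) (hy L) hFL
    hconsL k hk
  rwa [div_mul_cancel₀ _ (Real.exp_pos C).ne'] at this

theorem tendstoUniformlyOnGrid_euler {f : ℝ → E → E} {Y : ℝ → E} {y : ℕ → ℕ → E} {C : ℝ}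
    (hC : 0 ≤ C) (hf : ∀ t ∈ Icc (0 : ℝ) 1, ∀ u v, ‖f t u - f t v‖ ≤ C * ‖u - v‖)
    (hY : ∀ t ∈ Icc (0 : ℝ) 1, HasDerivAt Y (f t (Y t)) t)
    (hfY : ContinuousOn (fun t => f t (Y t)) (Icc 0 1)) (hy₀ : ∀ L, y L 0 = Y 0)
    (hy : ∀ L, ∀ k < L, y L (k + 1) = y L k + (L : ℝ)⁻¹ • f (k / L) (y L k)) :
    TendstoUniformlyOnGrid y Y :=
  tendstoUniformlyOnGrid_of_lipschitz_of_consistent (F := fun L k => f (k / L)) hC hY hy₀ hy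
    (Eventually.of_forall fun _ _ hk => hf _ (natCast_div_mem_Icc hk.le))
    hfY.tendstoUniformlyOnCells

end Euler

theorem tendstoUniformlyOnGrid_of_backward_linear {R : Type*} [NormedRing R] [NormedSpace ℝ R]
    {G B : ℝ → R} {g Bd : ℕ → ℕ → R} (hG : ∀ t ∈ Icc (0 : ℝ) 1, HasDerivAt G (-(G t * B t)) t)
    (hB : ContinuousOn B (Icc 0 1)) (hgL : ∀ L, g L L = G 1)
    (hg : ∀ L, ∀ k < L, g L k = g L (k + 1) + (L : ℝ)⁻¹ • (g L (k + 1) * Bd L k))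
    (hBd : TendstoUniformlyOnCells Bd B) : TendstoUniformlyOnGrid g G := by
  -- In reversed time `t ↦ 1 - t` the recursion is a forward one-step scheme for `Y' = Y B(1 - t)`.
  have hrev : MapsTo (fun t : ℝ => 1 - t) (Icc 0 1) (Icc 0 1) :=
    fun t ht => ⟨by linarith [ht.2], by linarith [ht.1]⟩
  have hY : ∀ t ∈ Icc (0 : ℝ) 1,
      HasDerivAt (fun t => G (1 - t)) (G (1 - t) * B (1 - t)) t := fun t ht => by
    have := (hG (1 - t) (hrev ht)).scomp t ((hasDerivAt_id t).const_sub 1)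
    rwa [neg_smul, one_smul, neg_neg] at this
  obtain ⟨MB, hMB⟩ := isCompact_Icc.exists_bound_of_continuousOn hB
  have hMB₀ : 0 ≤ MB := (norm_nonneg _).trans (hMB 0 (left_mem_Icc.2 zero_le_one))
  refine TendstoUniformlyOnGrid.of_reverse <| tendstoUniformlyOnGrid_of_lipschitz_of_consistent
    (F := fun L j u => u * Bd L (L - (j + 1))) (C := MB + 1) (by positivity) hY
    (fun L => by simpa using hgL L)
    (fun L j hj => by rw [hg L (L - (j + 1)) (by omega), show L - (j + 1) + 1 = L - j by omega])
    ?_ ?_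
  · filter_upwards [hBd.eventually_norm_le hMB] with L hL j hj u v
    calc ‖u * Bd L (L - (j + 1)) - v * Bd L (L - (j + 1))‖
        = ‖(u - v) * Bd L (L - (j + 1))‖ := by rw [sub_mul]
      _ ≤ ‖u - v‖ * ‖Bd L (L - (j + 1))‖ := norm_mul_le _ _
      _ ≤ (MB + 1) * ‖u - v‖ := by rw [mul_comm]; gcongr; exact hL _ (by omega)
  · have hYc := HasDerivAt.continuousOn hY
    exact hYc.tendstoUniformlyOnCells.mul hBd.reverse hYc
      (hB.comp (continuousOn_const.sub continuousOn_id) hrev)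

lemma continuousOn_of_eq_add_intervalIntegral {F : Type*} [NormedAddCommGroup F]
    [NormedSpace ℝ F] {f f' : ℝ → F} {a b : ℝ} (hf' : IntegrableOn f' (Icc a b))
    (hf : ∀ t ∈ Icc a b, f t = f a + ∫ s in a..t, f' s) : ContinuousOn f (Icc a b) := by
  rcases le_or_gt a b with hab | hab
  · have := intervalIntegral.continuousOn_primitive_interval (a := a) (b := b)
      (by rwa [uIcc_of_le hab])
    rw [uIcc_of_le hab] at this
    exact (continuousOn_const.add this).congr hf
  · simp [Icc_eq_empty_of_lt hab]

lemma PiLp.norm_le_mul_norm_of_forall {ι : Type*} [Fintype ι] {β : ι → Type*}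
    [∀ i, SeminormedAddCommGroup (β i)] {C : ℝ} (hC : 0 ≤ C) {u v : PiLp 2 β}
    (h : ∀ i, ‖u i‖ ≤ C * ‖v i‖) : ‖u‖ ≤ C * ‖v‖ := by
  rw [← sq_le_sq₀ (norm_nonneg _) (by positivity), mul_pow, PiLp.norm_sq_eq_of_L2,
    PiLp.norm_sq_eq_of_L2, Finset.mul_sum]
  gcongr with i
  rw [← mul_pow]
  exact pow_le_pow_left₀ (norm_nonneg _) (h i) 2

section ResNet

variable {d : ℕ}

local notation "E" => EuclideanSpace ℝ (Fin d)

lemma sigd_apply (σ : ℝ → ℝ) (z : E) (i : Fin d) :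
    sigd σ z i = σ (z i) := rfl

lemma LipschitzWith.sigd {σ : ℝ → ℝ} {K : NNReal} (hσ : LipschitzWith K σ) :
    LipschitzWith K (sigd (d := d) σ) :=
  LipschitzWith.of_dist_le_mul fun a b => by
    simp only [dist_eq_norm]
    refine PiLp.norm_le_mul_norm_of_forall K.2 fun i => ?_
    simpa [sigd_apply, dist_eq_norm] using hσ.dist_le_mul (a i) (b i)

lemma Continuous.sigd {σ : ℝ → ℝ} (hσ : Continuous σ) : Continuous (sigd (d := d) σ) :=
  (PiLp.continuous_toLp 2 _).comp
    (continuous_pi fun i => hσ.comp (PiLp.continuous_apply 2 _ i))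

lemma diagCLM_apply (v x : E) (i : Fin d) :
    diagCLM v x i = v i * x i := by
  change Matrix.toLpLin 2 2 (Matrix.diagonal fun i => v i) x i = _
  simp [Matrix.toLpLin_apply, Matrix.mulVec_diagonal]

lemma continuous_diagCLM : Continuous (diagCLM (d := d)) := by
  refine continuous_clm_apply.2 fun x => ?_
  have : (fun v => diagCLM v x) = fun v => WithLp.toLp 2 (fun i => v i * x i) := by
    ext v i
    exact diagCLM_apply v x i
  rw [this]
  exact (PiLp.continuous_toLp 2 _).comp
    (continuous_pi fun i => (PiLp.continuous_apply 2 _ i).mul continuous_const)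

lemma norm_sigd_add_sub_le {σ : ℝ → ℝ} {K : NNReal} (hσ : LipschitzWith K σ)
    (A : E →L[ℝ] E) (b u v : E) :
    ‖sigd σ (A u + b) - sigd σ (A v + b)‖ ≤ K * ‖A‖ * ‖u - v‖ := by
  calc ‖sigd σ (A u + b) - sigd σ (A v + b)‖ ≤ K * ‖A u + b - (A v + b)‖ := by
        simpa only [dist_eq_norm] using hσ.sigd.dist_le_mul (A u + b) (A v + b)
    _ = K * ‖A (u - v)‖ := by rw [map_sub, add_sub_add_right_eq_sub]
    _ ≤ K * (‖A‖ * ‖u - v‖) := by gcongr; exact A.le_opNorm _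
    _ = K * ‖A‖ * ‖u - v‖ := by ring

theorem tendstoUniformlyOnGrid_resnet_hidden {σ : ℝ → ℝ} {K : NNReal} (hσ : LipschitzWith K σ)
    {A : ℝ → E →L[ℝ] E} {b : ℝ → E} {H : ℝ → E} {h : ℕ → ℕ → E}
    (hA : ContinuousOn A (Icc 0 1)) (hb : ContinuousOn b (Icc 0 1)) (hh₀ : ∀ L, h L 0 = H 0)
    (hh : ∀ L, ∀ k < L, h L (k + 1) = h L k + (L : ℝ)⁻¹ • sigd σ (A (k / L) (h L k) + b (k / L)))
    (hH : ∀ t ∈ Icc (0 : ℝ) 1, HasDerivAt H (sigd σ (A t (H t) + b t)) t) :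
    TendstoUniformlyOnGrid h H := by
  obtain ⟨MA, hMA⟩ := isCompact_Icc.exists_bound_of_continuousOn hA
  have hMA₀ : 0 ≤ MA := (norm_nonneg _).trans (hMA 0 (left_mem_Icc.2 zero_le_one))
  refine tendstoUniformlyOnGrid_euler (f := fun t u => sigd σ (A t u + b t)) (C := K * MA)
    (by positivity) (fun t ht u v => ?_) hH ?_ hh₀ hh
  · exact (norm_sigd_add_sub_le hσ _ _ _ _).trans (by gcongr; exact hMA t ht)
  · exact hσ.continuous.sigd.comp_continuousOn
      ((hA.clm_apply (HasDerivAt.continuousOn hH)).add hb)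

theorem tendstoUniformlyOnGrid_resnet_jacobian {σ' : ℝ → ℝ} (hσ' : Continuous σ')
    {A : ℝ → E →L[ℝ] E} {b : ℝ → E} {H : ℝ → E} {h : ℕ → ℕ → E} {G : ℝ → E →L[ℝ] E}
    {g : ℕ → ℕ → E →L[ℝ] E} (hA : ContinuousOn A (Icc 0 1)) (hb : ContinuousOn b (Icc 0 1))
    (hH : ContinuousOn H (Icc 0 1)) (hhH : TendstoUniformlyOnGrid h H) (hgL : ∀ L, g L L = G 1)
    (hg : ∀ L, ∀ k < L, g L k = (g L (k + 1)).comp (ContinuousLinearMap.id ℝ E + (L : ℝ)⁻¹ •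
      (diagCLM (sigd σ' (A (k / L) (h L k) + b (k / L)))).comp (A (k / L))))
    (hG : ∀ t ∈ Icc (0 : ℝ) 1,
      HasDerivAt G (-(G t).comp ((diagCLM (sigd σ' (A t (H t) + b t))).comp (A t))) t) :
    TendstoUniformlyOnGrid g G := by
  set Ψ : E × (E →L[ℝ] E) × E → (E →L[ℝ] E) :=
    fun p => (diagCLM (sigd σ' (p.2.1 p.1 + p.2.2))).comp p.2.1
  have hΨ : Continuous Ψ :=
    (continuous_diagCLM.comp (hσ'.sigd.comp ((continuous_snd.fst.clm_apply continuous_fst).add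
      continuous_snd.snd))).clm_comp continuous_snd.fst
  set W : ℝ → E × (E →L[ℝ] E) × E := fun t => (H t, A t, b t)
  have hW : ContinuousOn W (Icc 0 1) := hH.prodMk (hA.prodMk hb)
  have hwW : TendstoUniformlyOnGrid (fun L k => (h L k, A (k / L), b (k / L))) W :=
    fun ε hε => (hhH ε hε).mono fun L hL k hk => by simpa [W] using hL k hk
  refine tendstoUniformlyOnGrid_of_backward_linear (B := fun t => Ψ (W t)) hG
    (hΨ.comp_continuousOn hW) hgL (fun L k hk => ?_) ((hwW.tendstoUniformlyOnCells hW).comp hW hΨ)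
  rw [hg L k hk, ContinuousLinearMap.comp_add, ContinuousLinearMap.comp_id,
    ContinuousLinearMap.comp_smul]
  rfl

end ResNet

theorem backprop_limit_neural_ode_regime_general
    (d : ℕ) (x : EuclideanSpace ℝ (Fin d))
    -- activation function
    (σ : ℝ → ℝ) (hσC3 : ContDiff ℝ 3 σ)
    (K : NNReal) (hσLip : LipschitzWith K σ)
    -- weights: Ā, b̄ belong to H¹([0,1])
    (Abar : ℝ → (EuclideanSpace ℝ (Fin d) →L[ℝ] EuclideanSpace ℝ (Fin d)))
    (bbar : ℝ → EuclideanSpace ℝ (Fin d))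
    (A' : ℝ → (EuclideanSpace ℝ (Fin d) →L[ℝ] EuclideanSpace ℝ (Fin d)))
    (b' : ℝ → EuclideanSpace ℝ (Fin d))
    (hA'L2 : MemLp A' 2 (volume.restrict (Icc (0:ℝ) 1)))
    (hb'L2 : MemLp b' 2 (volume.restrict (Icc (0:ℝ) 1)))
    (hAbar : ∀ t ∈ Icc (0:ℝ) 1, Abar t = Abar 0 + ∫ s in (0:ℝ)..t, A' s)
    (hbbar : ∀ t ∈ Icc (0:ℝ) 1, bbar t = bbar 0 + ∫ s in (0:ℝ)..t, b' s)
    -- forward hidden states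
    (h : ℕ → ℕ → EuclideanSpace ℝ (Fin d))
    (hh0 : ∀ L : ℕ, h L 0 = x)
    (hhrec : ∀ L : ℕ, ∀ k < L, h L (k+1) =
      h L k + ((L:ℝ))⁻¹ • sigd σ (Abar ((k:ℝ)/(L:ℝ)) (h L k) + bbar ((k:ℝ)/(L:ℝ))))
    -- backward Jacobians
    (g : ℕ → ℕ → (EuclideanSpace ℝ (Fin d) →L[ℝ] EuclideanSpace ℝ (Fin d)))
    (hgL : ∀ L : ℕ, g L L = ContinuousLinearMap.id ℝ (EuclideanSpace ℝ (Fin d)))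
    (hgrec : ∀ L : ℕ, ∀ k < L, g L k = (g L (k+1)).comp
      (ContinuousLinearMap.id ℝ (EuclideanSpace ℝ (Fin d)) + ((L:ℝ))⁻¹ •
        (diagCLM (sigd (deriv σ) (Abar ((k:ℝ)/(L:ℝ)) (h L k) + bbar ((k:ℝ)/(L:ℝ))))).comp
          (Abar ((k:ℝ)/(L:ℝ)))))
    -- solution of the forward neural ODE
    (H : ℝ → EuclideanSpace ℝ (Fin d)) (hH0 : H 0 = x)
    (hHode : ∀ t ∈ Icc (0:ℝ) 1, HasDerivAt H (sigd σ (Abar t (H t) + bbar t)) t)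
    -- solution of the backward linear ODE
    (G : ℝ → (EuclideanSpace ℝ (Fin d) →L[ℝ] EuclideanSpace ℝ (Fin d)))
    (hG1 : G 1 = ContinuousLinearMap.id ℝ (EuclideanSpace ℝ (Fin d)))
    (hGode : ∀ t ∈ Icc (0:ℝ) 1, HasDerivAt G
      (-(G t).comp ((diagCLM (sigd (deriv σ) (Abar t (H t) + bbar t))).comp (Abar t))) t) :
    Tendsto (fun L : ℕ => ⨆ t : Icc (0:ℝ) 1, ‖G t - g L ⌈(L:ℝ) * (t:ℝ)⌉₊‖)
      atTop (nhds 0) := by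
  have hA := continuousOn_of_eq_add_intervalIntegral (hA'L2.integrable one_le_two) hAbar
  have hb := continuousOn_of_eq_add_intervalIntegral (hb'L2.integrable one_le_two) hbbar
  have hhH : TendstoUniformlyOnGrid h H := tendstoUniformlyOnGrid_resnet_hidden hσLip hA hb
    (fun L => (hh0 L).trans hH0.symm) hhrec hHode
  have hgG : TendstoUniformlyOnGrid g G := tendstoUniformlyOnGrid_resnet_jacobian
    (hσC3.continuous_deriv (by norm_num)) hA hb (HasDerivAt.continuousOn hHode) hhH
    (fun L => (hgL L).trans hG1.symm) hgrec hGode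
  exact tendsto_iSup_norm_sub_natCeil (HasDerivAt.continuousOn hGode) hgG

/-- **Backpropagation limit in the neural ODE regime (Theorem 5.1, first case).**
With `σ ∈ C³`, `σ(0)=0`, `σ'(0)=1`, bounded third derivative, `σ` Lipschitz, and
`Ā, b̄ ∈ H¹([0,1])`, the backward Jacobians `g_L^{(L)} = I`,
`g_k^{(L)} = g_{k+1}^{(L)} (I + L⁻¹ diag(σ'_d(Ā_{k/L} h_k^{(L)} + b̄_{k/L})) Ā_{k/L})`
of the ResNet, interpolated as `Ḡ_t^{(L)} = g_⌈Lt⌉^{(L)}`, converge uniformly on `[0,1]` to the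
solution `G` of the backward linear ODE
`dG_t/dt = −G_t diag(σ'_d(Ā_t H_t + b̄_t)) Ā_t`, `G_1 = I`, where `H` solves the neural ODE. -/
theorem backprop_limit_neural_ode_regime
    (d : ℕ) (hd : 1 ≤ d) (x : EuclideanSpace ℝ (Fin d))
    -- activation function
    (σ : ℝ → ℝ) (hσC3 : ContDiff ℝ 3 σ) (hσ0 : σ 0 = 0) (hσ'0 : deriv σ 0 = 1)
    (C3 : ℝ) (hσ3 : ∀ y : ℝ, |iteratedDeriv 3 σ y| ≤ C3)
    (K : NNReal) (hσLip : LipschitzWith K σ)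
    -- weights: Ā, b̄ belong to H¹([0,1])
    (Abar : ℝ → (EuclideanSpace ℝ (Fin d) →L[ℝ] EuclideanSpace ℝ (Fin d)))
    (bbar : ℝ → EuclideanSpace ℝ (Fin d))
    (A' : ℝ → (EuclideanSpace ℝ (Fin d) →L[ℝ] EuclideanSpace ℝ (Fin d)))
    (b' : ℝ → EuclideanSpace ℝ (Fin d))
    (hA'L2 : MemLp A' 2 (volume.restrict (Icc (0:ℝ) 1)))
    (hb'L2 : MemLp b' 2 (volume.restrict (Icc (0:ℝ) 1)))
    (hAbar : ∀ t ∈ Icc (0:ℝ) 1, Abar t = Abar 0 + ∫ s in (0:ℝ)..t, A' s)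
    (hbbar : ∀ t ∈ Icc (0:ℝ) 1, bbar t = bbar 0 + ∫ s in (0:ℝ)..t, b' s)
    -- forward hidden states
    (h : ℕ → ℕ → EuclideanSpace ℝ (Fin d))
    (hh0 : ∀ L : ℕ, h L 0 = x)
    (hhrec : ∀ L : ℕ, ∀ k < L, h L (k+1) =
      h L k + ((L:ℝ))⁻¹ • sigd σ (Abar ((k:ℝ)/(L:ℝ)) (h L k) + bbar ((k:ℝ)/(L:ℝ))))
    -- backward Jacobians
    (g : ℕ → ℕ → (EuclideanSpace ℝ (Fin d) →L[ℝ] EuclideanSpace ℝ (Fin d)))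
    (hgL : ∀ L : ℕ, g L L = ContinuousLinearMap.id ℝ (EuclideanSpace ℝ (Fin d)))
    (hgrec : ∀ L : ℕ, ∀ k < L, g L k = (g L (k+1)).comp
      (ContinuousLinearMap.id ℝ (EuclideanSpace ℝ (Fin d)) + ((L:ℝ))⁻¹ •
        (diagCLM (sigd (deriv σ) (Abar ((k:ℝ)/(L:ℝ)) (h L k) + bbar ((k:ℝ)/(L:ℝ))))).comp
          (Abar ((k:ℝ)/(L:ℝ)))))
    -- solution of the forward neural ODE
    (H : ℝ → EuclideanSpace ℝ (Fin d)) (hH0 : H 0 = x)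
    (hHode : ∀ t ∈ Icc (0:ℝ) 1, HasDerivAt H (sigd σ (Abar t (H t) + bbar t)) t)
    -- solution of the backward linear ODE
    (G : ℝ → (EuclideanSpace ℝ (Fin d) →L[ℝ] EuclideanSpace ℝ (Fin d)))
    (hG1 : G 1 = ContinuousLinearMap.id ℝ (EuclideanSpace ℝ (Fin d)))
    (hGode : ∀ t ∈ Icc (0:ℝ) 1, HasDerivAt G
      (-(G t).comp ((diagCLM (sigd (deriv σ) (Abar t (H t) + bbar t))).comp (Abar t))) t) :
    Tendsto (fun L : ℕ => ⨆ t : Icc (0:ℝ) 1, ‖G t - g L ⌈(L:ℝ) * (t:ℝ)⌉₊‖)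
      atTop (nhds 0) :=
  backprop_limit_neural_ode_regime_general d x σ hσC3 K hσLip Abar bbar A' b' hA'L2 hb'L2 hAbar
    hbbar h hh0 hhrec g hgL hgrec H hH0 hHode G hG1 hGode
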